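/- arXiv:2504.21439 — 3 statements merged into one kernel-verified Lean document; each statement's English description precedes it below -/
import Mathlib

section
/- For all n ≥ 0, R̄_{4,3}(12n+7) ≡ 0 (mod 8). -/
/-!
Modulo 8, an admissible partition (no part divisible by `l` or `m`) with `k` distinct part sizes
contributes `2 ^ k` to `Rbar l m N`, so only `k = 1` and `k = 2` matter: `Rbar ≡ 2 A + 4 B`, where
`A` counts the partitions `d^(N/d)`, i.e. the admissible divisors `d` of `N`, and `B` the partitions
`a^i b^j` with `a < b`.

Count the ordered pairs of blocks `(a^i, b^j)` with admissible `a`, `b` and `a i + b j = N`: there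
are `2 B` of them with `a ≠ b` and `∑ (N / d - 1)` over admissible `d ∣ N` with `a = b`. Grouped by
the weights `(s, N - s)` they number `∑_s c(s) c(N - s)`, where `c(s)` counts the admissible
divisors of `s`. For `l = 4` and odd `m`, `c(s)` is even when `s` is even (move a factor `2` between
a part size and its multiplicity), and for odd `N` the terms for `s` and `N - s` are equal and one
factor of each is even, so the total is divisible by `4`.

For `N ≡ 3 (mod 4)` with `m ∤ N` every divisor of `N` is admissible, and `d ↦ N / d` is a
fixed-point-free involution with `d + N / d ≡ 0 (mod 4)`; hence `A` is even and `4 ∣ σ(N)`. The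
count above then gives `2 B ≡ A (mod 4)`, so `2 A + 4 B ≡ 4 A ≡ 0 (mod 8)`.
-/

/-- Number of overpartitions of `n` in which no part is divisible by `l` or by `m`
(an overpartition is a partition where the first occurrence of each part size may be
overlined, so each partition contributes `2 ^ (number of distinct part sizes)`). -/
def Rbar (l m n : ℕ) : ℕ :=
  ∑ p : Nat.Partition n,
    if ∀ i ∈ p.parts, ¬ l ∣ i ∧ ¬ m ∣ i then 2 ^ p.parts.toFinset.card else 0

open Finset

namespace Finset

theorem dvd_sum_of_involution {α : Type*} {s : Finset α} {f : α → ℕ} {k : ℕ} (g : α → α)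
    (hdvd : ∀ a ∈ s, k ∣ f a + f (g a)) (hne : ∀ a ∈ s, g a ≠ a) (hmem : ∀ a ∈ s, g a ∈ s)
    (hinv : ∀ a ∈ s, g (g a) = a) : k ∣ ∑ a ∈ s, f a := by
  rw [← ZMod.natCast_eq_zero_iff, Nat.cast_sum]
  refine sum_involution (fun a _ => g a) (fun a ha => ?_) (fun a ha _ => hne a ha) hmem hinv
  rw [← Nat.cast_add, ZMod.natCast_eq_zero_iff]
  exact hdvd a ha

theorem even_card_of_involution {α : Type*} {s : Finset α} (g : α → α)
    (hne : ∀ a ∈ s, g a ≠ a) (hmem : ∀ a ∈ s, g a ∈ s) (hinv : ∀ a ∈ s, g (g a) = a) :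
    Even #s := by
  rw [card_eq_sum_ones, even_iff_two_dvd]
  exact dvd_sum_of_involution g (fun _ _ => dvd_rfl) hne hmem hinv

theorem pair_eq_pair_of_lt {α : Type*} [LinearOrder α] {a b c d : α} (hab : a < b) (hcd : c < d)
    (h : ({a, b} : Finset α) = {c, d}) : a = c ∧ b = d := by
  have hmem : ∀ x, x = a ∨ x = b ↔ x = c ∨ x = d := fun x => by
    simpa only [mem_insert, mem_singleton] using Finset.ext_iff.1 h x
  rcases (hmem a).1 (.inl rfl) with hac | had <;> rcases (hmem b).1 (.inr rfl) with hbc | hbd <;>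
    rcases (hmem c).2 (.inl rfl) with hca | hcb <;> constructor <;> order

theorem Nat.four_dvd_sum_antidiagonal_mul {c : ℕ → ℕ} {n : ℕ} (hn : Odd n)
    (hc : ∀ s, Even s → Even (c s)) : 4 ∣ ∑ st ∈ antidiagonal n, c st.1 * c st.2 := by
  refine dvd_sum_of_involution Prod.swap (fun st hst => ?_) (fun st hst hfix => ?_)
    (fun st hst => mem_antidiagonal.2 ((mem_antidiagonal.1 hst) ▸ add_comm _ _))
    (fun st _ => st.swap_swap)
  · obtain ⟨s, t⟩ := st
    have hst : s + t = n := mem_antidiagonal.1 hst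
    obtain ⟨r, hr⟩ : Even (c s * c t) := by
      rcases Nat.even_or_odd s with hs | hs
      · exact (hc s hs).mul_right _
      · have ht : Even t := by rw [Nat.even_iff]; rw [Nat.odd_iff] at hs hn; omega
        exact (hc t ht).mul_left _
    show 4 ∣ c s * c t + c t * c s
    rw [mul_comm (c t), hr]
    exact ⟨r, by ring⟩
  · obtain ⟨s, t⟩ := st
    have hst : s + t = n := mem_antidiagonal.1 hst
    have : t = s := congrArg Prod.fst hfix
    obtain ⟨r, hr⟩ := hn
    omega

end Finset

namespace Multiset

theorem toFinset_replicate_add_replicate {α : Type*} [DecidableEq α] {a b : α} {i j : ℕ}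
    (hi : i ≠ 0) (hj : j ≠ 0) :
    (replicate i a + replicate j b).toFinset = {a, b} := by
  rw [toFinset_add, toFinset_replicate, toFinset_replicate, if_neg hi, if_neg hj,
    Finset.insert_eq]

theorem eq_replicate_add_replicate_of_toFinset_eq_pair {α : Type*} [DecidableEq α]
    {s : Multiset α} {a b : α} (hab : a ≠ b) (h : s.toFinset = {a, b}) :
    s = replicate (s.count a) a + replicate (s.count b) b := by
  conv_lhs => rw [← toFinset_sum_count_nsmul_eq s]
  rw [h, Finset.sum_pair hab, nsmul_singleton, nsmul_singleton]

end Multiset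

namespace Nat

theorem four_dvd_add_of_mul_mod_four_eq_three {a b : ℕ} (h : a * b % 4 = 3) : 4 ∣ a + b := by
  rw [Nat.mul_mod] at h
  have ha := Nat.mod_lt a (show 4 > 0 by norm_num)
  have hb := Nat.mod_lt b (show 4 > 0 by norm_num)
  interval_cases hra : a % 4 <;> interval_cases hrb : b % 4 <;> omega

theorem div_ne_self_of_mod_four_eq_three {N d : ℕ} (hN : N % 4 = 3) (hd : d ∣ N) : N / d ≠ d := by
  intro h
  have := four_dvd_add_of_mul_mod_four_eq_three (a := d) (b := N / d)
    (by rw [Nat.mul_div_cancel' hd, hN])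
  have hodd : ¬ 2 ∣ d := fun h2 => by have := h2.trans hd; omega
  omega

theorem div_mem_divisors {N d : ℕ} (hd : d ∈ N.divisors) : N / d ∈ N.divisors :=
  mem_divisors.2 ⟨div_dvd_of_dvd (dvd_of_mem_divisors hd), (mem_divisors.1 hd).2⟩

theorem div_div_of_mem_divisors {N d : ℕ} (hd : d ∈ N.divisors) : N / (N / d) = d :=
  Nat.div_div_self (dvd_of_mem_divisors hd) (mem_divisors.1 hd).2

theorem div_ne_zero_of_mem_divisors {N d : ℕ} (hd : d ∈ N.divisors) : N / d ≠ 0 :=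
  (Nat.div_pos (divisor_le hd) (pos_of_mem_divisors hd)).ne'

theorem even_card_divisors_of_mod_four_eq_three {N : ℕ} (hN : N % 4 = 3) : Even #N.divisors :=
  even_card_of_involution (N / ·)
    (fun _ hd => div_ne_self_of_mod_four_eq_three hN (dvd_of_mem_divisors hd))
    (fun _ => div_mem_divisors) (fun _ => div_div_of_mem_divisors)

theorem four_dvd_sum_divisors_of_mod_four_eq_three {N : ℕ} (hN : N % 4 = 3) :
    4 ∣ ∑ d ∈ N.divisors, d :=
  dvd_sum_of_involution (N / ·)
    (fun _ hd => four_dvd_add_of_mul_mod_four_eq_three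
      (by rw [Nat.mul_div_cancel' (dvd_of_mem_divisors hd), hN]))
    (fun _ hd => div_ne_self_of_mod_four_eq_three hN (dvd_of_mem_divisors hd))
    (fun _ => div_mem_divisors) (fun _ => div_div_of_mem_divisors)

theorem sum_div_sub_one_add_card_divisors (N : ℕ) :
    ∑ d ∈ N.divisors, (N / d - 1) + #N.divisors = ∑ d ∈ N.divisors, d := by
  rw [card_eq_sum_ones, ← sum_add_distrib, ← Nat.sum_div_divisors N (fun d => d)]
  exact sum_congr rfl fun d hd =>
    Nat.sub_add_cancel (pos_of_ne_zero (div_ne_zero_of_mem_divisors hd))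

end Nat

namespace Rbar

abbrev Admissible (l m a : ℕ) : Prop := ¬ l ∣ a ∧ ¬ m ∣ a

theorem Admissible.ne_zero {l m a : ℕ} (h : Admissible l m a) : a ≠ 0 := by
  rintro rfl
  exact h.1 (dvd_zero l)

/-- A block `(a, i)` stands for `i` copies of the admissible part `a`, of total weight `s`. -/
def admissibleBlocks (l m s : ℕ) : Finset (ℕ × ℕ) :=
  s.divisorsAntidiagonal.filter fun x => Admissible l m x.1

theorem mem_admissibleBlocks {l m s a i : ℕ} :
    (a, i) ∈ admissibleBlocks l m s ↔ Admissible l m a ∧ a * i = s ∧ s ≠ 0 := by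
  rw [admissibleBlocks, mem_filter, Nat.mem_divisorsAntidiagonal]
  tauto

/-- Admissible sizes for `l = 4` have `2`-adic valuation at most `1`, so on the blocks of an even
weight this is a fixed-point-free involution. -/
def moveFactorTwo (x : ℕ × ℕ) : ℕ × ℕ :=
  if 2 ∣ x.1 then (x.1 / 2, 2 * x.2) else (2 * x.1, x.2 / 2)

theorem even_card_admissibleBlocks {μ s : ℕ} (hμ : Odd μ) (hs : Even s) :
    Even #(admissibleBlocks 4 μ s) := by
  have two_dvd_of_mem : ∀ {a i}, (a, i) ∈ admissibleBlocks 4 μ s → ¬ 2 ∣ a → 2 ∣ i := by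
    intro a i hx h2
    obtain ⟨-, rfl, -⟩ := mem_admissibleBlocks.1 hx
    exact ((Nat.prime_two.dvd_mul).1 (even_iff_two_dvd.1 hs)).resolve_left h2
  refine even_card_of_involution moveFactorTwo ?_ ?_ ?_
  · rintro ⟨a, i⟩ hx h
    have ha0 := (mem_admissibleBlocks.1 hx).1.ne_zero
    dsimp only [moveFactorTwo] at h
    split_ifs at h <;> simp only [Prod.mk.injEq] at h <;> omega
  · rintro ⟨a, i⟩ hx
    obtain ⟨⟨h4, hμa⟩, hai, hs0⟩ := mem_admissibleBlocks.1 hx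
    dsimp only [moveFactorTwo]
    split_ifs with h2
    · obtain ⟨c, rfl⟩ := h2
      simp only [Nat.mul_div_cancel_left c two_pos]
      exact mem_admissibleBlocks.2
        ⟨⟨by omega, fun h => hμa (h.mul_left 2)⟩, by rw [← hai]; ring, hs0⟩
    · obtain ⟨t, rfl⟩ := two_dvd_of_mem hx h2
      simp only [Nat.mul_div_cancel_left t two_pos]
      exact mem_admissibleBlocks.2 ⟨⟨by omega,
        fun h => hμa (hμ.coprime_two_right.dvd_of_dvd_mul_left h)⟩, by rw [← hai]; ring, hs0⟩
  · rintro ⟨a, i⟩ hx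
    have h4 := (mem_admissibleBlocks.1 hx).1.1
    have hi := two_dvd_of_mem hx
    dsimp only [moveFactorTwo]
    split_ifs <;> simp only [Prod.mk.injEq] at * <;> omega

def blockPairs (l m n : ℕ) : Finset ((ℕ × ℕ) × (ℕ × ℕ)) :=
  (antidiagonal n).biUnion fun st => admissibleBlocks l m st.1 ×ˢ admissibleBlocks l m st.2

theorem mem_blockPairs {l m n a i b j : ℕ} :
    ((a, i), (b, j)) ∈ blockPairs l m n ↔
      Admissible l m a ∧ Admissible l m b ∧ i ≠ 0 ∧ j ≠ 0 ∧ a * i + b * j = n := by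
  simp only [blockPairs, mem_biUnion, HasAntidiagonal.mem_antidiagonal, mem_product,
    mem_admissibleBlocks]
  constructor
  · rintro ⟨st, rfl, ⟨ha, hai, hs⟩, ⟨hb, hbj, ht⟩⟩
    exact ⟨ha, hb, right_ne_zero_of_mul (hai ▸ hs), right_ne_zero_of_mul (hbj ▸ ht),
      by rw [hai, hbj]⟩
  · rintro ⟨ha, hb, hi, hj, rfl⟩
    exact ⟨(a * i, b * j), rfl, ⟨ha, rfl, mul_ne_zero ha.ne_zero hi⟩,
      ⟨hb, rfl, mul_ne_zero hb.ne_zero hj⟩⟩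

theorem swap_mem_blockPairs {l m n : ℕ} {x : (ℕ × ℕ) × (ℕ × ℕ)} (hx : x ∈ blockPairs l m n) :
    x.swap ∈ blockPairs l m n := by
  obtain ⟨⟨a, i⟩, ⟨b, j⟩⟩ := x
  obtain ⟨ha, hb, hi, hj, hsum⟩ := mem_blockPairs.1 hx
  exact mem_blockPairs.2 ⟨hb, ha, hj, hi, by rw [← hsum, add_comm]⟩

theorem card_blockPairs (l m n : ℕ) :
    #(blockPairs l m n) =
      ∑ st ∈ antidiagonal n, #(admissibleBlocks l m st.1) * #(admissibleBlocks l m st.2) := by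
  rw [blockPairs, card_biUnion]
  · exact sum_congr rfl fun _ _ => card_product _ _
  · rintro st - st' - hne
    refine disjoint_left.2 fun x hx hx' => hne ?_
    rw [mem_product] at hx hx'
    simp only [admissibleBlocks, mem_filter, Nat.mem_divisorsAntidiagonal] at hx hx'
    exact Prod.ext (hx.1.1.1.symm.trans hx'.1.1.1) (hx.2.1.1.symm.trans hx'.2.1.1)

theorem four_dvd_card_blockPairs {μ n : ℕ} (hμ : Odd μ) (hn : Odd n) :
    4 ∣ #(blockPairs 4 μ n) := by
  rw [card_blockPairs]
  exact Finset.Nat.four_dvd_sum_antidiagonal_mul hn fun _ => even_card_admissibleBlocks hμ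

theorem card_blockPairs_filter_gt (l m n : ℕ) :
    #((blockPairs l m n).filter fun x => x.2.1 < x.1.1) =
      #((blockPairs l m n).filter fun x => x.1.1 < x.2.1) := by
  refine card_nbij' Prod.swap Prod.swap ?_ ?_ (fun x _ => x.swap_swap) (fun x _ => x.swap_swap) <;>
  · intro x hx
    simp only [mem_coe, mem_filter] at hx ⊢
    exact ⟨swap_mem_blockPairs hx.1, hx.2⟩

theorem card_blockPairs_filter_eq (l m n : ℕ) :
    #((blockPairs l m n).filter fun x => x.1.1 = x.2.1) =
      ∑ d ∈ n.divisors.filter (Admissible l m), (n / d - 1) := by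
  simp_rw [← Nat.card_Ico 1, ← card_sigma]
  refine card_nbij' (fun x => ⟨x.1.1, x.1.2⟩) (fun y => ((y.1, y.2), (y.1, n / y.1 - y.2)))
    ?_ ?_ ?_ ?_
  · rintro ⟨⟨a, i⟩, ⟨b, j⟩⟩ hx
    simp only [mem_coe, mem_filter, mem_blockPairs] at hx
    obtain ⟨⟨ha, -, hi, hj, hsum⟩, rfl⟩ := hx
    have hn : n / a = i + j := by
      rw [← hsum, ← mul_add, Nat.mul_div_cancel_left _ (Nat.pos_of_ne_zero ha.ne_zero)]
    have hai := mul_ne_zero ha.ne_zero hi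
    dsimp only
    rw [mem_coe, mem_sigma, mem_filter, Nat.mem_divisors, mem_Ico, hn]
    exact ⟨⟨⟨Dvd.intro _ (by rw [← hsum, mul_add]),
      fun h0 => hai (Nat.add_eq_zero_iff.1 (hsum.trans h0)).1⟩, ha⟩,
      Nat.one_le_iff_ne_zero.2 hi, Nat.lt_add_of_pos_right (Nat.pos_of_ne_zero hj)⟩
  · rintro ⟨d, i⟩ hy
    rw [mem_coe, mem_sigma, mem_filter, Nat.mem_divisors, mem_Ico] at hy
    obtain ⟨⟨⟨hd, -⟩, ha⟩, hi, hin⟩ := hy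
    rw [mem_coe, mem_filter, mem_blockPairs]
    refine ⟨⟨ha, ha, by omega, by omega, ?_⟩, rfl⟩
    rw [← mul_add, Nat.add_sub_cancel' hin.le, Nat.mul_div_cancel' hd]
  · rintro ⟨⟨a, i⟩, ⟨b, j⟩⟩ hx
    simp only [mem_coe, mem_filter, mem_blockPairs] at hx
    obtain ⟨⟨ha, -, -, -, rfl⟩, rfl⟩ := hx
    dsimp only
    rw [← mul_add, Nat.mul_div_cancel_left _ (Nat.pos_of_ne_zero ha.ne_zero),
      Nat.add_sub_cancel_left]
  · rintro ⟨d, i⟩ -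
    rfl

def partitionsWithNumDistinct (l m n k : ℕ) : Finset n.Partition :=
  (Nat.Partition.restricted n (Admissible l m)).filter fun p => #p.parts.toFinset = k

theorem mem_partitionsWithNumDistinct {l m n k : ℕ} {p : n.Partition} :
    p ∈ partitionsWithNumDistinct l m n k ↔
      (∀ i ∈ p.parts, Admissible l m i) ∧ #p.parts.toFinset = k := by
  rw [partitionsWithNumDistinct, Nat.Partition.restricted, filter_filter, mem_filter]
  exact and_iff_right (mem_univ p)

def blockPairPartition {l m n : ℕ} (x : (ℕ × ℕ) × (ℕ × ℕ)) (hx : x ∈ blockPairs l m n) :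
    n.Partition where
  parts := Multiset.replicate x.1.2 x.1.1 + Multiset.replicate x.2.2 x.2.1
  parts_pos hy := by
    obtain ⟨⟨a, i⟩, ⟨b, j⟩⟩ := x
    obtain ⟨ha, hb, -⟩ := mem_blockPairs.1 hx
    rcases Multiset.mem_add.1 hy with h | h <;> rw [Multiset.eq_of_mem_replicate h]
    exacts [Nat.pos_of_ne_zero ha.ne_zero, Nat.pos_of_ne_zero hb.ne_zero]
  parts_sum := by
    obtain ⟨⟨a, i⟩, ⟨b, j⟩⟩ := x
    obtain ⟨-, -, -, -, hsum⟩ := mem_blockPairs.1 hx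
    rw [Multiset.sum_add, Multiset.sum_replicate, Multiset.sum_replicate, smul_eq_mul,
      smul_eq_mul, mul_comm i, mul_comm j, hsum]

theorem card_blockPairs_filter_lt (l m n : ℕ) :
    #((blockPairs l m n).filter fun x => x.1.1 < x.2.1) =
      #(partitionsWithNumDistinct l m n 2) := by
  refine card_bij (fun x hx => blockPairPartition x (mem_filter.1 hx).1) ?_ ?_ ?_
  · rintro ⟨⟨a, i⟩, ⟨b, j⟩⟩ hx
    simp only [mem_filter, mem_blockPairs] at hx
    obtain ⟨⟨ha, hb, hi, hj, -⟩, hab⟩ := hx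
    refine mem_partitionsWithNumDistinct.2 ⟨fun y hy => ?_, ?_⟩
    · rcases Multiset.mem_add.1 hy with h | h <;> rw [Multiset.eq_of_mem_replicate h]
      exacts [ha, hb]
    · rw [blockPairPartition, Multiset.toFinset_replicate_add_replicate hi hj]
      exact card_pair hab.ne
  · rintro ⟨⟨a, i⟩, ⟨b, j⟩⟩ hx ⟨⟨a', i'⟩, ⟨b', j'⟩⟩ hx' h
    simp only [mem_filter, mem_blockPairs] at hx hx'
    obtain ⟨⟨-, -, hi, hj, -⟩, hab⟩ := hx
    obtain ⟨⟨-, -, hi', hj', -⟩, hab'⟩ := hx'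
    have hparts := congrArg Nat.Partition.parts h
    simp only [blockPairPartition] at hparts
    obtain ⟨rfl, rfl⟩ := pair_eq_pair_of_lt hab hab' <| by
      rw [← Multiset.toFinset_replicate_add_replicate hi hj, hparts,
        Multiset.toFinset_replicate_add_replicate hi' hj']
    have hcount_a := congrArg (Multiset.count a) hparts
    have hcount_b := congrArg (Multiset.count b) hparts
    simp only [Multiset.count_add, Multiset.count_replicate, hab.ne, hab.ne', if_true,
      if_false, add_zero, zero_add] at hcount_a hcount_b
    rw [hcount_a, hcount_b]
  · intro p hp
    obtain ⟨hadm, hcard⟩ := mem_partitionsWithNumDistinct.1 hp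
    obtain ⟨a, b, hab, hpair⟩ : ∃ a b, a < b ∧ p.parts.toFinset = {a, b} := by
      obtain ⟨x, y, hxy, h⟩ := card_eq_two.1 hcard
      rcases hxy.lt_or_gt with hxy | hxy
      exacts [⟨x, y, hxy, h⟩, ⟨y, x, hxy, h.trans (pair_comm x y)⟩]
    have hmem : ∀ c ∈ ({a, b} : Finset ℕ), c ∈ p.parts := fun c hc =>
      Multiset.mem_toFinset.1 (hpair ▸ hc)
    have hparts := Multiset.eq_replicate_add_replicate_of_toFinset_eq_pair hab.ne hpair
    refine ⟨((a, p.parts.count a), (b, p.parts.count b)), mem_filter.2 ⟨mem_blockPairs.2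
      ⟨hadm a (hmem a (by simp)), hadm b (hmem b (by simp)),
        Multiset.count_ne_zero.2 (hmem a (by simp)), Multiset.count_ne_zero.2 (hmem b (by simp)),
        ?_⟩, hab⟩, Nat.Partition.ext hparts.symm⟩
    conv_rhs => rw [← p.parts_sum, hparts]
    rw [Multiset.sum_add, Multiset.sum_replicate, Multiset.sum_replicate, smul_eq_mul,
      smul_eq_mul, mul_comm a, mul_comm b]

theorem card_blockPairs_eq (l m n : ℕ) :
    #(blockPairs l m n) =
      2 * #(partitionsWithNumDistinct l m n 2) +
        ∑ d ∈ n.divisors.filter (Admissible l m), (n / d - 1) := by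
  rw [← card_blockPairs_filter_lt, ← card_blockPairs_filter_eq, two_mul]
  nth_rewrite 2 [← card_blockPairs_filter_gt]
  rw [card_filter, card_filter, card_filter, ← sum_add_distrib, ← sum_add_distrib,
    card_eq_sum_ones]
  refine sum_congr rfl fun x _ => ?_
  split_ifs <;> omega

theorem card_partitionsWithNumDistinct_one (l m n : ℕ) :
    #(partitionsWithNumDistinct l m n 1) = #(n.divisors.filter (Admissible l m)) := by
  symm
  refine card_bij (fun d hd => ⟨Multiset.replicate (n / d) d,
      fun hy => Multiset.eq_of_mem_replicate hy ▸ Nat.pos_of_mem_divisors (mem_filter.1 hd).1,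
      by rw [Multiset.sum_replicate, smul_eq_mul,
        Nat.div_mul_cancel (Nat.dvd_of_mem_divisors (mem_filter.1 hd).1)]⟩) ?_ ?_ ?_
  · intro d hd
    obtain ⟨hdn, hadm⟩ := mem_filter.1 hd
    refine mem_partitionsWithNumDistinct.2
      ⟨fun y hy => Multiset.eq_of_mem_replicate hy ▸ hadm, ?_⟩
    rw [Multiset.toFinset_replicate, if_neg (Nat.div_ne_zero_of_mem_divisors hdn), card_singleton]
  · intro d hd d' hd' h
    have hq := Nat.div_ne_zero_of_mem_divisors (mem_filter.1 hd).1
    have hparts : Multiset.replicate (n / d) d = Multiset.replicate (n / d') d' :=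
      congrArg Nat.Partition.parts h
    exact Multiset.eq_of_mem_replicate (hparts ▸ Multiset.mem_replicate.2 ⟨hq, rfl⟩)
  · intro p hp
    obtain ⟨hadm, hcard⟩ := mem_partitionsWithNumDistinct.1 hp
    obtain ⟨a, ha⟩ := card_eq_one.1 hcard
    obtain ⟨hne, hparts⟩ := (Multiset.toFinset_eq_singleton_iff _ _).1 ha
    rw [Multiset.nsmul_singleton] at hparts
    have hsum : Multiset.card p.parts * a = n := by
      have := p.parts_sum
      rwa [hparts, Multiset.sum_replicate, smul_eq_mul] at this
    have hmem : a ∈ p.parts := hparts ▸ Multiset.mem_replicate.2 ⟨hne, rfl⟩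
    refine ⟨a, mem_filter.2 ⟨Nat.mem_divisors.2 ⟨Dvd.intro_left _ hsum, ?_⟩, hadm a hmem⟩, ?_⟩
    · rw [← hsum]; exact mul_ne_zero hne (hadm a hmem).ne_zero
    · refine Nat.Partition.ext ?_
      dsimp only
      rw [hparts]
      exact congrArg₂ _ (Nat.div_eq_of_eq_mul_left (Nat.pos_of_ne_zero (hadm a hmem).ne_zero)
        hsum.symm) rfl

theorem two_pow_eq_ite_zmod_eight {k : ℕ} (hk : k ≠ 0) :
    (2 : ZMod 8) ^ k = (if k = 1 then 2 else 0) + (if k = 2 then 4 else 0) := by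
  match k, hk with
  | 1, _ => rfl
  | 2, _ => rfl
  | k + 3, _ => rw [pow_add, show (2 : ZMod 8) ^ 3 = 0 from rfl, mul_zero, if_neg (by omega),
      if_neg (by omega), add_zero]

theorem natCast_zmod_eight_eq (l m : ℕ) {n : ℕ} (hn : n ≠ 0) :
    (Rbar l m n : ZMod 8) =
      2 * #(partitionsWithNumDistinct l m n 1) + 4 * #(partitionsWithNumDistinct l m n 2) := by
  have hcard : ∀ p : n.Partition, #p.parts.toFinset ≠ 0 := fun p h => hn <| by
    rw [card_eq_zero, Multiset.toFinset_eq_empty] at h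
    rw [← p.parts_sum, h, Multiset.sum_zero]
  rw [Rbar, ← sum_filter, Nat.cast_sum]
  simp only [Nat.cast_pow, Nat.cast_ofNat, two_pow_eq_ite_zmod_eight (hcard _), sum_add_distrib,
    ← sum_filter, sum_const, nsmul_eq_mul, filter_filter, partitionsWithNumDistinct,
    Nat.Partition.restricted]
  ring

theorem four_mod_eight_eq_zero {μ N : ℕ} (hμ : Odd μ) (hN : N % 4 = 3) (hμN : ¬ μ ∣ N) :
    Rbar 4 μ N % 8 = 0 := by
  have hadm : N.divisors.filter (Admissible 4 μ) = N.divisors := by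
    refine filter_true_of_mem fun d hd => ?_
    have hdN := Nat.dvd_of_mem_divisors hd
    refine ⟨fun h => ?_, fun h => hμN (h.trans hdN)⟩
    have := h.trans hdN
    omega
  have hRbar := natCast_zmod_eight_eq 4 μ (show N ≠ 0 by omega)
  rw [card_partitionsWithNumDistinct_one, hadm] at hRbar
  have hpairs := card_blockPairs_eq 4 μ N
  rw [hadm] at hpairs
  have h4pairs := four_dvd_card_blockPairs hμ (Nat.odd_iff.2 (show N % 2 = 1 by omega))
  have h4sigma := Nat.four_dvd_sum_divisors_of_mod_four_eq_three hN
  have hdiag := Nat.sum_div_sub_one_add_card_divisors N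
  obtain ⟨r, hr⟩ := Nat.even_card_divisors_of_mod_four_eq_three hN
  have h8 : 8 ∣ 2 * #N.divisors + 4 * #(partitionsWithNumDistinct 4 μ N 2) := by omega
  rw [← Nat.dvd_iff_mod_eq_zero, ← ZMod.natCast_eq_zero_iff, hRbar]
  exact_mod_cast (ZMod.natCast_eq_zero_iff _ _).2 h8

end Rbar

theorem Rbar_four_three_twelve_n_add_seven (n : ℕ) : Rbar 4 3 (12 * n + 7) % 8 = 0 :=
  Rbar.four_mod_eight_eq_zero (by decide) (by omega) (by omega)
end

section
/- For all n ≥ 0, R̄_{4,3}(12n+11) ≡ 0 (mod 8). -/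
/-!
Modulo 8 an overpartition count only sees the partitions with one or two distinct part sizes,
weighted `2` and `4`: `R̄(N) ≡ 2 A + 4 B`, where `A` counts the allowed divisors of `N` and `B` the
representations `N = a x + b y` with allowed parts `a > b` and `x, y ≥ 1`. For `N = 12 n + 11` every
divisor of `N` is allowed, so `A = d(N)`, and the ordered representations number `S = 2 B + D`,
where the diagonal ones (`a = b`) number `D = σ(N) - d(N)`. Since `N` is odd, swapping the two terms
and then halving or doubling the even one of `a`, `x` (an even allowed `a` is `2` mod `4`) show
`4 ∣ S`; pairing `d ∣ N` with `N / d` shows `4 ∣ σ(N)` and `2 ∣ d(N)` because `N ≡ 3 (mod 4)`.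
Hence `R̄(N) ≡ 2 S - 2 σ(N) + 4 d(N) ≡ 0 (mod 8)`.
-/

open Finset Nat.Partition

namespace Multiset

lemma toFinset_replicate_add_replicate_s2 {a b x y : ℕ} (hx : x ≠ 0) (hy : y ≠ 0) :
    (replicate x a + replicate y b).toFinset = {a, b} := by
  ext; simp [hx, hy]

lemma exists_eq_replicate_add_replicate {s : Multiset ℕ} (hs : s.toFinset.card = 2) :
    ∃ a b, b < a ∧ a ∈ s ∧ b ∈ s ∧ s = replicate (s.count a) a + replicate (s.count b) b := by
  obtain ⟨c, d, hcd, hs⟩ := Finset.card_eq_two.1 hs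
  have key : ∀ a b, s.toFinset = {a, b} → a ≠ b →
      a ∈ s ∧ b ∈ s ∧ s = replicate (s.count a) a + replicate (s.count b) b := fun a b h hab => by
    refine ⟨by simp [← mem_toFinset, h], by simp [← mem_toFinset, h], ?_⟩
    conv_lhs => rw [← toFinset_sum_count_nsmul_eq s]
    rw [h, Finset.sum_pair hab, nsmul_singleton, nsmul_singleton]
  rcases hcd.lt_or_gt with h | h
  · rw [Finset.pair_comm] at hs
    exact ⟨d, c, h, key d c hs h.ne'⟩
  · exact ⟨c, d, h, key c d hs h.ne'⟩

lemma replicate_add_replicate_inj {a b x y a' b' x' y' : ℕ} (hba : b < a) (hba' : b' < a')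
    (hx : x ≠ 0) (hy : y ≠ 0) (hx' : x' ≠ 0) (hy' : y' ≠ 0)
    (h : replicate x a + replicate y b = replicate x' a' + replicate y' b') :
    a = a' ∧ x = x' ∧ b = b' ∧ y = y' := by
  have hset := congrArg toFinset h
  rw [toFinset_replicate_add_replicate_s2 hx hy, toFinset_replicate_add_replicate_s2 hx' hy'] at hset
  have ha : a = a' := by
    have h1 : a ∈ ({a', b'} : Finset ℕ) := hset ▸ by simp
    have h2 : a' ∈ ({a, b} : Finset ℕ) := hset ▸ by simp
    simp only [Finset.mem_insert, Finset.mem_singleton] at h1 h2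
    omega
  have hb : b = b' := by
    have h1 : b ∈ ({a', b'} : Finset ℕ) := hset ▸ by simp
    simp only [Finset.mem_insert, Finset.mem_singleton] at h1
    omega
  subst ha hb
  have hcount := congrArg (count a) h
  have hcount' := congrArg (count b) h
  simp only [count_add, count_replicate_self, count_replicate, hba.ne, hba.ne', if_false]
    at hcount hcount'
  omega

end Multiset

section TwoTermReps

variable (P : ℕ → Prop) [DecidablePred P]

/-- `((a, x), (b, y))` stands for `x` parts equal to `a` and `y` parts equal to `b`. -/
def twoTermReps (N : ℕ) : Finset ((ℕ × ℕ) × (ℕ × ℕ)) :=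
  ((antidiagonal N).biUnion fun uv => uv.1.divisorsAntidiagonal ×ˢ uv.2.divisorsAntidiagonal).filter
    fun r => P r.1.1 ∧ P r.2.1

variable {P} {N : ℕ}

lemma mem_twoTermReps {r : (ℕ × ℕ) × (ℕ × ℕ)} :
    r ∈ twoTermReps P N ↔ r.1.1 * r.1.2 + r.2.1 * r.2.2 = N ∧ r.1.1 * r.1.2 ≠ 0 ∧
      r.2.1 * r.2.2 ≠ 0 ∧ P r.1.1 ∧ P r.2.1 := by
  simp only [twoTermReps, mem_filter, mem_biUnion, HasAntidiagonal.mem_antidiagonal, mem_product,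
    Nat.mem_divisorsAntidiagonal]
  constructor
  · rintro ⟨⟨uv, huv, ⟨h1, h2⟩, h3, h4⟩, hP⟩
    exact ⟨by rw [h1, h3, huv], h1 ▸ h2, h3 ▸ h4, hP⟩
  · rintro ⟨h, h1, h2, hP⟩
    exact ⟨⟨(_, _), h, ⟨rfl, h1⟩, rfl, h2⟩, hP⟩

lemma swap_mem_twoTermReps {r : (ℕ × ℕ) × (ℕ × ℕ)} :
    r.swap ∈ twoTermReps P N ↔ r ∈ twoTermReps P N := by
  obtain ⟨⟨a, x⟩, b, y⟩ := r
  simp only [Prod.swap_prod_mk, mem_twoTermReps]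
  constructor <;> rintro ⟨h, h1, h2, hPa, hPb⟩ <;> exact ⟨by omega, h2, h1, hPb, hPa⟩

lemma card_filter_twoTermReps_swap (Q : (ℕ × ℕ) × (ℕ × ℕ) → Prop) [DecidablePred Q] :
    #{r ∈ twoTermReps P N | Q r.swap} = #{r ∈ twoTermReps P N | Q r} :=
  card_nbij' Prod.swap Prod.swap (fun r hr => by simp_all [swap_mem_twoTermReps])
    (fun r hr => by simp_all [swap_mem_twoTermReps]) (fun _ _ => rfl) (fun _ _ => rfl)

lemma card_twoTermReps_eq_two_mul_add :
    #(twoTermReps P N) = 2 * #{r ∈ twoTermReps P N | r.2.1 < r.1.1}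
      + #{r ∈ twoTermReps P N | r.1.1 = r.2.1} := by
  have hswap : #{r ∈ twoTermReps P N | r.1.1 < r.2.1} = #{r ∈ twoTermReps P N | r.2.1 < r.1.1} :=
    card_filter_twoTermReps_swap fun r => r.2.1 < r.1.1
  calc #(twoTermReps P N)
      = ∑ r ∈ twoTermReps P N, ((if r.2.1 < r.1.1 then 1 else 0) + (if r.1.1 < r.2.1 then 1 else 0)
          + if r.1.1 = r.2.1 then 1 else 0) := by
        rw [card_eq_sum_ones]
        refine sum_congr rfl fun r _ => ?_
        split_ifs <;> omega
    _ = _ := by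
        simp only [sum_add_distrib, sum_boole, Nat.cast_id]
        rw [hswap]
        ring

lemma card_filter_twoTermReps_diag_add_card_divisors (hP : ∀ a ∈ N.divisors, P a) :
    #{r ∈ twoTermReps P N | r.1.1 = r.2.1} + #N.divisors = ∑ a ∈ N.divisors, a := by
  have hdiag {a x y : ℕ} (h : ((a, x), (a, y)) ∈ twoTermReps P N) :
      a ∈ N.divisors ∧ 0 < x ∧ 0 < y ∧ N / a = x + y := by
    obtain ⟨hsum, hax, hay, -⟩ := mem_twoTermReps.1 h
    have hN : a * (x + y) = N := by rw [← hsum, Nat.mul_add]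
    refine ⟨Nat.mem_divisors.2 ⟨Dvd.intro _ hN, by omega⟩, Nat.pos_of_ne_zero
      (right_ne_zero_of_mul hax), Nat.pos_of_ne_zero (right_ne_zero_of_mul hay), ?_⟩
    rw [← hN, Nat.mul_div_cancel_left _ (Nat.pos_of_ne_zero (left_ne_zero_of_mul hax))]
  have hcard : #{r ∈ twoTermReps P N | r.1.1 = r.2.1}
      = #(N.divisors.sigma fun a => Ioo 0 (N / a)) := by
    refine card_nbij' (fun r => ⟨r.1.1, r.1.2⟩) (fun s => ((s.1, s.2), (s.1, N / s.1 - s.2)))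
      ?_ ?_ ?_ (fun _ _ => rfl)
    · rintro ⟨⟨a, x⟩, b, y⟩ hr
      obtain ⟨hr, rfl⟩ := by simpa only [mem_coe, mem_filter] using hr
      obtain ⟨ha, hx, hy, hdiv⟩ := hdiag hr
      simp only [coe_sigma, Set.mem_sigma_iff, mem_coe, mem_Ioo, hdiv]
      exact ⟨ha, hx, by omega⟩
    · rintro ⟨a, x⟩ hs
      simp only [coe_sigma, Set.mem_sigma_iff, mem_coe, mem_Ioo] at hs
      obtain ⟨ha, hx, hxN⟩ := hs
      have hdvd := Nat.dvd_of_mem_divisors ha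
      simp only [mem_coe, mem_filter, mem_twoTermReps, and_true]
      refine ⟨?_, Nat.mul_ne_zero (Nat.pos_of_mem_divisors ha).ne' hx.ne',
        Nat.mul_ne_zero (Nat.pos_of_mem_divisors ha).ne' (by omega), hP a ha, hP a ha⟩
      rw [← Nat.mul_add, Nat.add_sub_cancel' hxN.le, Nat.mul_div_cancel' hdvd]
    · rintro ⟨⟨a, x⟩, b, y⟩ hr
      obtain ⟨hr, rfl⟩ := by simpa only [mem_coe, mem_filter] using hr
      simp only [(hdiag hr).2.2.2, Nat.add_sub_cancel_left]
  rw [hcard, card_sigma, card_eq_sum_ones, ← sum_add_distrib]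
  refine (sum_congr rfl fun a ha => ?_).trans (Nat.sum_div_divisors N id)
  have : 0 < N / a := Nat.div_pos (Nat.divisor_le ha) (Nat.pos_of_mem_divisors ha)
  rw [Nat.card_Ioo, id]
  omega

end TwoTermReps

def halveOrDouble (e : ℕ × ℕ) : ℕ × ℕ :=
  if 2 ∣ e.1 then (e.1 / 2, 2 * e.2) else (2 * e.1, e.2 / 2)

section HalveOrDouble

variable {a x : ℕ}

lemma halveOrDouble_of_two_dvd (ha : 2 ∣ a) : halveOrDouble (a, x) = (a / 2, 2 * x) := if_pos ha

lemma halveOrDouble_of_not_two_dvd (ha : ¬ 2 ∣ a) : halveOrDouble (a, x) = (2 * a, x / 2) :=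
  if_neg ha

lemma halveOrDouble_mul (h : 2 ∣ a * x) :
    (halveOrDouble (a, x)).1 * (halveOrDouble (a, x)).2 = a * x := by
  by_cases ha : 2 ∣ a
  · obtain ⟨c, rfl⟩ := ha
    rw [halveOrDouble_of_two_dvd (dvd_mul_right 2 c), Nat.mul_div_cancel_left c two_pos]
    ring
  · obtain ⟨d, rfl⟩ := (Nat.prime_two.dvd_mul.1 h).resolve_left ha
    rw [halveOrDouble_of_not_two_dvd ha, Nat.mul_div_cancel_left d two_pos]
    ring

lemma halveOrDouble_fst_ne (ha : a ≠ 0) : (halveOrDouble (a, x)).1 ≠ a := by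
  by_cases h : 2 ∣ a
  · rw [halveOrDouble_of_two_dvd h]; omega
  · rw [halveOrDouble_of_not_two_dvd h]; omega

lemma halveOrDouble_halveOrDouble (h : 2 ∣ a * x) (h4 : ¬ 4 ∣ a) :
    halveOrDouble (halveOrDouble (a, x)) = (a, x) := by
  by_cases ha : 2 ∣ a
  · rw [halveOrDouble_of_two_dvd ha, halveOrDouble_of_not_two_dvd (by omega), Prod.mk.injEq]
    omega
  · have hx : 2 ∣ x := (Nat.prime_two.dvd_mul.1 h).resolve_left ha
    rw [halveOrDouble_of_not_two_dvd ha, halveOrDouble_of_two_dvd (dvd_mul_right 2 a),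
      Prod.mk.injEq]
    omega

lemma halveOrDouble_fst_allowed {m : ℕ} (hm : Odd m) (h4 : ¬ 4 ∣ a) (hm' : ¬ m ∣ a) :
    ¬ 4 ∣ (halveOrDouble (a, x)).1 ∧ ¬ m ∣ (halveOrDouble (a, x)).1 := by
  by_cases ha : 2 ∣ a
  · rw [halveOrDouble_of_two_dvd ha]
    exact ⟨by omega, fun hdvd => hm' (hdvd.trans (Nat.div_dvd_of_dvd ha))⟩
  · rw [halveOrDouble_of_not_two_dvd ha]
    exact ⟨by omega, fun hdvd => hm' (hm.coprime_two_right.dvd_of_dvd_mul_left hdvd)⟩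

end HalveOrDouble

section AllowedParts

variable {m N : ℕ}

lemma even_card_filter_twoTermReps_two_dvd_mul (hm : Odd m) :
    Even #{r ∈ twoTermReps (fun i => ¬ 4 ∣ i ∧ ¬ m ∣ i) N | 2 ∣ r.1.1 * r.1.2} := by
  rw [← ZMod.natCast_eq_zero_iff_even, card_eq_sum_ones, Nat.cast_sum]
  refine sum_involution (fun r _ => (halveOrDouble r.1, r.2)) (fun _ _ => by decide)
    (fun r hr _ h => ?_) (fun r hr => ?_) (fun r hr => ?_)
  all_goals
    obtain ⟨⟨a, x⟩, b, y⟩ := r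
    obtain ⟨⟨hsum, hax, hby, hPa, hPb⟩, h2⟩ := by simpa only [mem_filter, mem_twoTermReps] using hr
  · exact halveOrDouble_fst_ne (left_ne_zero_of_mul hax) (congrArg (·.1.1) h)
  · simp only [mem_filter, mem_twoTermReps, halveOrDouble_mul h2]
    exact ⟨⟨hsum, hax, hby, halveOrDouble_fst_allowed hm hPa.1 hPa.2, hPb⟩, h2⟩
  · rw [halveOrDouble_halveOrDouble h2 hPa.1]

lemma four_dvd_card_twoTermReps (hm : Odd m) (hN : Odd N) :
    4 ∣ #(twoTermReps (fun i => ¬ 4 ∣ i ∧ ¬ m ∣ i) N) := by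
  have hodd : #{r ∈ twoTermReps (fun i => ¬ 4 ∣ i ∧ ¬ m ∣ i) N | ¬ 2 ∣ r.1.1 * r.1.2}
      = #{r ∈ twoTermReps (fun i => ¬ 4 ∣ i ∧ ¬ m ∣ i) N | 2 ∣ r.1.1 * r.1.2} := by
    rw [← card_filter_twoTermReps_swap]
    congr 1
    refine filter_congr fun r hr => ?_
    have hsum := (mem_twoTermReps.1 hr).1
    simp only [Prod.fst_swap]
    obtain ⟨k, hk⟩ := hN
    omega
  obtain ⟨k, hk⟩ := even_card_filter_twoTermReps_two_dvd_mul (N := N) hm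
  rw [← card_filter_add_card_filter_not (p := fun r => 2 ∣ r.1.1 * r.1.2), hodd, hk]
  omega

end AllowedParts

namespace Nat.Partition

lemma card_toFinset_parts_ne_zero {N : ℕ} (hN : N ≠ 0) (p : N.Partition) :
    p.parts.toFinset.card ≠ 0 := by
  intro h
  rw [Finset.card_eq_zero, Multiset.toFinset_eq_empty] at h
  exact hN (p.parts_sum ▸ h ▸ Multiset.sum_zero)

lemma card_filter_restricted_card_toFinset_eq_one (P : ℕ → Prop) [DecidablePred P] (N : ℕ) :
    #{p ∈ restricted N P | p.parts.toFinset.card = 1} = #{a ∈ N.divisors | P a} := by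
  have hpos : ∀ a ∈ {a ∈ N.divisors | P a}, 0 < a ∧ N / a ≠ 0 := fun a ha => by
    simp only [mem_filter, Nat.mem_divisors] at ha
    have ha0 := Nat.pos_of_dvd_of_pos ha.1.1 (Nat.pos_of_ne_zero ha.1.2)
    exact ⟨ha0, (Nat.div_pos (Nat.le_of_dvd (Nat.pos_of_ne_zero ha.1.2) ha.1.1) ha0).ne'⟩
  symm
  refine card_bij (fun a ha => ⟨Multiset.replicate (N / a) a, fun hi => ?_, ?_⟩) ?_ ?_ ?_
  · exact Multiset.eq_of_mem_replicate hi ▸ (hpos a ha).1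
  · simp only [mem_filter, Nat.mem_divisors] at ha
    rw [Multiset.sum_replicate, smul_eq_mul, Nat.div_mul_cancel ha.1.1]
  · intro a ha
    simp only [restricted, mem_filter, Multiset.mem_replicate, Multiset.toFinset_replicate,
      (hpos a ha).2, if_false, card_singleton, mem_univ, true_and, and_true]
    rintro i ⟨-, rfl⟩
    exact (mem_filter.1 ha).2
  · intro a ha b hb hab
    have hparts : Multiset.replicate (N / a) a = Multiset.replicate (N / b) b := congrArg parts hab
    exact Multiset.eq_of_mem_replicate (hparts ▸ Multiset.mem_replicate.2 ⟨(hpos a ha).2, rfl⟩)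
  · intro p hp
    simp only [restricted, mem_filter, mem_univ, true_and] at hp
    obtain ⟨hcard, a, ha⟩ := (Multiset.toFinset_card_eq_one_iff p.parts).1 hp.2
    rw [Multiset.nsmul_singleton] at ha
    have hmem : a ∈ p.parts := ha ▸ Multiset.mem_replicate.2 ⟨hcard, rfl⟩
    have hsum := p.parts_sum
    rw [ha, Multiset.sum_replicate, smul_eq_mul] at hsum
    have hdiv : N / a = p.parts.card := Nat.div_eq_of_eq_mul_left (p.parts_pos hmem) hsum.symm
    refine ⟨a, ?_, Nat.Partition.ext ?_⟩
    · simp only [mem_filter, Nat.mem_divisors]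
      exact ⟨⟨Dvd.intro_left _ hsum, hsum ▸ Nat.mul_ne_zero hcard (p.parts_pos hmem).ne'⟩,
        hp.1 a hmem⟩
    · simp only [hdiv, ← ha]

lemma card_filter_restricted_card_toFinset_eq_two (P : ℕ → Prop) [DecidablePred P] (N : ℕ) :
    #{p ∈ restricted N P | p.parts.toFinset.card = 2} = #{r ∈ twoTermReps P N | r.2.1 < r.1.1} := by
  symm
  refine card_bij (fun r hr => ⟨Multiset.replicate r.1.2 r.1.1 + Multiset.replicate r.2.2 r.2.1,
    fun hi => ?_, ?_⟩) ?_ ?_ ?_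
  · obtain ⟨⟨a, x⟩, b, y⟩ := r
    obtain ⟨⟨-, hax, hby, -⟩, -⟩ := by simpa only [mem_filter, mem_twoTermReps] using hr
    rcases Multiset.mem_add.1 hi with hi | hi <;> rw [Multiset.eq_of_mem_replicate hi]
    exacts [Nat.pos_of_ne_zero (left_ne_zero_of_mul hax),
      Nat.pos_of_ne_zero (left_ne_zero_of_mul hby)]
  · obtain ⟨⟨a, x⟩, b, y⟩ := r
    obtain ⟨⟨hsum, -⟩, -⟩ := by simpa only [mem_filter, mem_twoTermReps] using hr
    simp only [Multiset.sum_add, Multiset.sum_replicate, smul_eq_mul]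
    linarith
  · rintro ⟨⟨a, x⟩, b, y⟩ hr
    obtain ⟨⟨-, hax, hby, hPa, hPb⟩, hba⟩ := by simpa only [mem_filter, mem_twoTermReps] using hr
    simp only [restricted, mem_filter, mem_univ, true_and,
      Multiset.toFinset_replicate_add_replicate_s2 (right_ne_zero_of_mul hax)
        (right_ne_zero_of_mul hby), card_pair hba.ne', and_true]
    intro i hi
    rcases Multiset.mem_add.1 hi with hi | hi <;> rw [Multiset.eq_of_mem_replicate hi]
    exacts [hPa, hPb]
  · rintro ⟨⟨a, x⟩, b, y⟩ hr ⟨⟨a', x'⟩, b', y'⟩ hr' h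
    obtain ⟨⟨-, hax, hby, -⟩, hba⟩ := by simpa only [mem_filter, mem_twoTermReps] using hr
    obtain ⟨⟨-, hax', hby', -⟩, hba'⟩ := by simpa only [mem_filter, mem_twoTermReps] using hr'
    obtain ⟨rfl, rfl, rfl, rfl⟩ := Multiset.replicate_add_replicate_inj hba hba'
      (right_ne_zero_of_mul hax) (right_ne_zero_of_mul hby) (right_ne_zero_of_mul hax')
      (right_ne_zero_of_mul hby') (congrArg parts h)
    rfl
  · intro p hp
    simp only [restricted, mem_filter, mem_univ, true_and] at hp
    obtain ⟨a, b, hba, ha, hb, hparts⟩ := Multiset.exists_eq_replicate_add_replicate hp.2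
    refine ⟨((a, p.parts.count a), (b, p.parts.count b)), ?_, Nat.Partition.ext hparts.symm⟩
    have hsum := p.parts_sum
    rw [hparts, Multiset.sum_add, Multiset.sum_replicate, Multiset.sum_replicate, smul_eq_mul,
      smul_eq_mul] at hsum
    simp only [mem_filter, mem_twoTermReps]
    exact ⟨⟨by linarith, Nat.mul_ne_zero (p.parts_pos ha).ne' (Multiset.count_ne_zero.2 ha),
      Nat.mul_ne_zero (p.parts_pos hb).ne' (Multiset.count_ne_zero.2 hb), hp.1 a ha, hp.1 b hb⟩,
      hba⟩

end Nat.Partition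

lemma Rbar_modEq_eight (l m : ℕ) {N : ℕ} (hN : N ≠ 0) :
    Rbar l m N ≡
      2 * #{p ∈ restricted N (fun i => ¬ l ∣ i ∧ ¬ m ∣ i) | p.parts.toFinset.card = 1} +
        4 * #{p ∈ restricted N (fun i => ¬ l ∣ i ∧ ¬ m ∣ i) | p.parts.toFinset.card = 2} [MOD 8] := by
  rw [← ZMod.natCast_eq_natCast_iff, Rbar, ← sum_filter]
  push_cast
  rw [natCast_card_filter, natCast_card_filter, mul_sum, mul_sum, ← sum_add_distrib]
  refine sum_congr rfl fun p _ => ?_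
  have hk := card_toFinset_parts_ne_zero hN p
  obtain h | h | h : p.parts.toFinset.card = 1 ∨ p.parts.toFinset.card = 2 ∨
      3 ≤ p.parts.toFinset.card := by omega
  · simp [h]
  · norm_num [h]
  · have h8 : (2 : ZMod 8) ^ 3 = 0 := by decide
    rw [if_neg (by omega), if_neg (by omega), ← Nat.sub_add_cancel h, pow_add, h8, mul_zero]
    simp

lemma Nat.div_mem_divisors_s2 {N a : ℕ} (ha : a ∈ N.divisors) : N / a ∈ N.divisors :=
  Nat.mem_divisors.2 ⟨Nat.div_dvd_of_dvd (Nat.dvd_of_mem_divisors ha), (Nat.mem_divisors.1 ha).2⟩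

section ModFourEqThree

variable {N : ℕ}

lemma natCast_zmod_four_of_mod_four_eq_three (hN : N % 4 = 3) : (N : ZMod 4) = 3 := by
  rw [← ZMod.natCast_mod, hN]; rfl

lemma natCast_mul_natCast_div_of_mod_four_eq_three (hN : N % 4 = 3) {a : ℕ} (ha : a ∣ N) :
    (a : ZMod 4) * (N / a : ℕ) = 3 := by
  rw [← Nat.cast_mul, Nat.mul_div_cancel' ha, natCast_zmod_four_of_mod_four_eq_three hN]

lemma sum_divisors_eq_zero_of_mod_four_eq_three {M : Type*} [AddCommMonoid M] (hN : N % 4 = 3)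
    (f : ℕ → M) (hf : ∀ a ∈ N.divisors, f a + f (N / a) = 0) : ∑ a ∈ N.divisors, f a = 0 := by
  refine sum_involution (fun a _ => N / a) hf (fun a ha _ hfix => ?_)
    (fun a ha => Nat.div_mem_divisors_s2 ha)
    (fun a ha => Nat.div_div_self (Nat.dvd_of_mem_divisors ha) (by omega))
  have h := natCast_mul_natCast_div_of_mod_four_eq_three hN (Nat.dvd_of_mem_divisors ha)
  rw [hfix] at h
  exact (by decide : ∀ z : ZMod 4, z * z ≠ 3) _ h

lemma even_card_divisors_of_mod_four_eq_three (hN : N % 4 = 3) : Even #N.divisors := by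
  rw [← ZMod.natCast_eq_zero_iff_even, card_eq_sum_ones, Nat.cast_sum]
  exact sum_divisors_eq_zero_of_mod_four_eq_three hN _ fun _ _ => by decide

lemma four_dvd_sum_divisors_of_mod_four_eq_three (hN : N % 4 = 3) : 4 ∣ ∑ a ∈ N.divisors, a := by
  rw [← ZMod.natCast_eq_zero_iff, Nat.cast_sum]
  refine sum_divisors_eq_zero_of_mod_four_eq_three hN _ fun a ha => ?_
  exact (by decide : ∀ z w : ZMod 4, z * w = 3 → z + w = 0) _ _
    (natCast_mul_natCast_div_of_mod_four_eq_three hN (Nat.dvd_of_mem_divisors ha))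

end ModFourEqThree

theorem Rbar_four_three_twelve_n_add_eleven_mod_eight (n : ℕ) :
    Rbar 4 3 (12 * n + 11) % 8 = 0 := by
  set N := 12 * n + 11
  have hallowed : ∀ a ∈ N.divisors, ¬ 4 ∣ a ∧ ¬ 3 ∣ a := fun a ha => by
    have := Nat.dvd_of_mem_divisors ha
    exact ⟨fun h => by have := h.trans this; omega, fun h => by have := h.trans this; omega⟩
  have hmod := Rbar_modEq_eight 4 3 (show N ≠ 0 by omega)
  rw [card_filter_restricted_card_toFinset_eq_one, filter_true_of_mem hallowed,
    card_filter_restricted_card_toFinset_eq_two] at hmod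
  have hS := card_twoTermReps_eq_two_mul_add (P := fun i => ¬ 4 ∣ i ∧ ¬ 3 ∣ i) (N := N)
  have hD := card_filter_twoTermReps_diag_add_card_divisors hallowed
  have h4S := four_dvd_card_twoTermReps (by decide : Odd 3) (⟨6 * n + 5, by omega⟩ : Odd N)
  have h4σ := four_dvd_sum_divisors_of_mod_four_eq_three (show N % 4 = 3 by omega)
  obtain ⟨k, hk⟩ := even_card_divisors_of_mod_four_eq_three (show N % 4 = 3 by omega)
  unfold Nat.ModEq at hmod
  omega
end

section
/- As formal power series over ℤ, 1/φ(-q) = φ(q)·φ(q^2)^2·φ(q^4)^4·φ(q^8)^8·⋯, where φ(q) = ∑_{k∈ℤ} q^{k^2}. -/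
/-!
The key step is the theta identity `φ(-q) φ(q) = φ(-q²)²`. The coefficient of `qⁿ` on the left
is `∑_{a² + b² = n} (-1)^a`. Since `a² + b² ≡ a + b (mod 2)`, for odd `n` the swap `(a, b) ↦ (b, a)`
flips every sign and the sum vanishes, while for `n = 2m` the substitution `(a, b) = (u + v, u - v)`
turns it into `∑_{u² + v² = m} (-1)^(u + v)`, the coefficient of `q^(2m)` in `φ(-q²)²`.
Substituting `q ↦ q^(2^i)` and inducting on `N` gives
`φ(-q) ∏_{i < N} φ(q^(2^i))^(2^i) = φ(-q^(2^N))^(2^N)`, which is `1 + O(q^(2^N))`.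
-/

open scoped Classical

/-- Ramanujan's theta function `φ(q^k) = ∑_{j ∈ ℤ} q^(k·j²)` as a formal power series in `q`. -/
noncomputable def phiPow (k : ℕ) : PowerSeries ℤ :=
  PowerSeries.mk fun m => if m = 0 then 1 else if ∃ j : ℕ, 0 < j ∧ j ^ 2 * k = m then 2 else 0

/-- `φ(-q) = ∑_{j ∈ ℤ} (-1)^j q^(j²)` as a formal power series in `q`. -/
noncomputable def phiNeg : PowerSeries ℤ :=
  PowerSeries.mk fun m =>
    if m = 0 then 1 else if ∃ j : ℕ, 0 < j ∧ j ^ 2 = m then 2 * (-1) ^ Nat.sqrt m else 0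

open Finset PowerSeries

lemma Int.even_sq_add_sq_iff (a b : ℤ) : Even (a ^ 2 + b ^ 2) ↔ Even (a + b) := by
  simp [Int.even_add, Int.even_pow]

lemma coeff_expand_of_lt {R : Type*} [CommRing R] {p : ℕ} (hp : p ≠ 0) (f : PowerSeries R)
    {m : ℕ} (hm : m < p) : coeff m (expand p hp f) = if m = 0 then constantCoeff f else 0 := by
  rw [coeff_expand]
  split_ifs with hdvd hm0 hm0
  · rw [hm0, Nat.zero_div, coeff_zero_eq_constantCoeff]
  · exact absurd (Nat.le_of_dvd (Nat.pos_of_ne_zero hm0) hdvd) (not_le.2 hm)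
  · exact absurd (hm0 ▸ dvd_zero p) hdvd
  · rfl

lemma mem_Icc_of_sq_le {j : ℤ} {m : ℕ} (h : j ^ 2 ≤ m) : j ∈ Icc (-m : ℤ) m := by
  rw [mem_Icc]
  constructor <;> nlinarith [Int.le_self_sq j, Int.le_self_sq (-j)]

-- `∑_{j ∈ ℤ} w j q^(j²)`
noncomputable def thetaSeries (w : ℤ → ℤ) : PowerSeries ℤ :=
  mk fun m => ∑ j ∈ Icc (-m : ℤ) m with j ^ 2 = (m : ℤ), w j

noncomputable def sqAddSqReps (n : ℕ) : Finset (ℤ × ℤ) :=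
  {p ∈ Icc (-n : ℤ) n ×ˢ Icc (-n : ℤ) n | p.1 ^ 2 + p.2 ^ 2 = n}

lemma mem_sqAddSqReps {n : ℕ} {p : ℤ × ℤ} : p ∈ sqAddSqReps n ↔ p.1 ^ 2 + p.2 ^ 2 = n := by
  simp only [sqAddSqReps, mem_filter, mem_product, and_iff_right_iff_imp]
  intro h
  exact ⟨mem_Icc_of_sq_le (by nlinarith [sq_nonneg p.2]),
    mem_Icc_of_sq_le (by nlinarith [sq_nonneg p.1])⟩

lemma coeff_thetaSeries_mul (w w' : ℤ → ℤ) (n : ℕ) :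
    coeff n (thetaSeries w * thetaSeries w') = ∑ p ∈ sqAddSqReps n, w p.1 * w' p.2 := by
  have hmaps : ∀ p ∈ sqAddSqReps n, ((p.1 ^ 2).toNat, (p.2 ^ 2).toNat) ∈ antidiagonal n := by
    intro p hp
    rw [mem_sqAddSqReps] at hp
    rw [HasAntidiagonal.mem_antidiagonal]
    have := sq_nonneg p.1; have := sq_nonneg p.2
    omega
  rw [coeff_mul, ← sum_fiberwise_of_maps_to hmaps]
  refine sum_congr rfl fun x hx => ?_
  rw [HasAntidiagonal.mem_antidiagonal] at hx
  simp only [thetaSeries, coeff_mk, sum_mul_sum, ← sum_product']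
  refine sum_congr (ext fun p => ?_) fun _ _ => rfl
  simp only [mem_filter, mem_product, mem_sqAddSqReps, Prod.ext_iff]
  have := sq_nonneg p.1; have := sq_nonneg p.2
  constructor
  · rintro ⟨⟨-, h1⟩, -, h2⟩
    omega
  · rintro ⟨-, h1, h2⟩
    have h1 : p.1 ^ 2 = x.1 := by omega
    have h2 : p.2 ^ 2 = x.2 := by omega
    exact ⟨⟨mem_Icc_of_sq_le h1.le, h1⟩, mem_Icc_of_sq_le h2.le, h2⟩

lemma sum_sqAddSqReps_negOnePow_of_odd {n : ℕ} (hn : Odd n) :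
    ∑ p ∈ sqAddSqReps n, (p.1.negOnePow : ℤ) = 0 := by
  have hswap_mem : ∀ p ∈ sqAddSqReps n, p.swap ∈ sqAddSqReps n := fun p hp => by
    rw [mem_sqAddSqReps] at hp ⊢
    rw [Prod.fst_swap, Prod.snd_swap, add_comm, hp]
  have hswap : ∑ p ∈ sqAddSqReps n, (p.1.negOnePow : ℤ) =
      ∑ p ∈ sqAddSqReps n, (p.2.negOnePow : ℤ) :=
    sum_nbij' Prod.swap Prod.swap hswap_mem hswap_mem (fun _ _ => rfl) (fun _ _ => rfl)
      (fun _ _ => rfl)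
  have hsign : ∀ p ∈ sqAddSqReps n, (p.2.negOnePow : ℤ) = -p.1.negOnePow := by
    intro p hp
    have hodd : Odd (p.1 + p.2) := by
      rw [← Int.not_even_iff_odd, ← Int.even_sq_add_sq_iff, mem_sqAddSqReps.1 hp,
        Int.not_even_iff_odd]
      exact_mod_cast hn
    rw [show p.2 = p.1 + p.2 - p.1 by ring, Int.negOnePow_sub, Int.negOnePow_odd _ hodd]
    simp
  rw [sum_congr rfl hsign, sum_neg_distrib] at hswap
  linarith

lemma even_add_of_mem_sqAddSqReps_two_mul {n : ℕ} {p : ℤ × ℤ} (hp : p ∈ sqAddSqReps (2 * n)) :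
    Even (p.1 + p.2) := by
  rw [← Int.even_sq_add_sq_iff, mem_sqAddSqReps.1 hp]
  exact ⟨n, by push_cast; ring⟩

lemma sum_sqAddSqReps_negOnePow_mul_negOnePow (n : ℕ) :
    ∑ p ∈ sqAddSqReps n, (p.1.negOnePow : ℤ) * p.2.negOnePow =
      ∑ p ∈ sqAddSqReps (2 * n), (p.1.negOnePow : ℤ) := by
  refine sum_nbij' (fun p => (p.1 + p.2, p.1 - p.2)) (fun p => ((p.1 + p.2) / 2, (p.1 - p.2) / 2))
    ?_ ?_ ?_ ?_ ?_
  · intro p hp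
    rw [mem_sqAddSqReps] at hp ⊢
    push_cast
    linear_combination 2 * hp
  · intro p hp
    obtain ⟨c, hc⟩ := even_add_of_mem_sqAddSqReps_two_mul hp
    rw [mem_sqAddSqReps] at hp ⊢
    have h1 : (p.1 + p.2) / 2 = c := by omega
    have h2 : (p.1 - p.2) / 2 = c - p.2 := by omega
    have h3 : p.1 = 2 * c - p.2 := by omega
    rw [h3] at hp
    push_cast at hp
    rw [h1, h2]
    linarith
  · intro p _
    ext <;> dsimp only <;> omega
  · intro p hp
    obtain ⟨c, hc⟩ := even_add_of_mem_sqAddSqReps_two_mul hp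
    ext <;> dsimp only <;> omega
  · intro p _
    rw [Int.negOnePow_add, Units.val_mul]

lemma coeff_sq_thetaSeries (w : ℤ → ℤ) (j : ℕ) :
    coeff (j ^ 2) (thetaSeries w) = if j = 0 then w 0 else w j + w (-j) := by
  have hfiber : {i ∈ Icc (-(j ^ 2 : ℕ) : ℤ) (j ^ 2 : ℕ) | i ^ 2 = ((j ^ 2 : ℕ) : ℤ)} =
      {(j : ℤ), -(j : ℤ)} := by
    ext i
    simp only [mem_filter, mem_insert, mem_singleton, Nat.cast_pow]
    rw [← sq_eq_sq_iff_eq_or_eq_neg]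
    exact ⟨And.right, fun h => ⟨mem_Icc_of_sq_le (by rw [h]; push_cast; rfl), h⟩⟩
  rw [thetaSeries, coeff_mk, hfiber]
  split_ifs with hj
  · simp [hj]
  · rw [sum_pair (by omega)]

lemma coeff_thetaSeries_of_forall_sq_ne (w : ℤ → ℤ) {m : ℕ} (hm : ∀ j : ℕ, j ^ 2 ≠ m) :
    coeff m (thetaSeries w) = 0 := by
  rw [thetaSeries, coeff_mk, sum_eq_zero]
  intro i hi
  rw [mem_filter] at hi
  exact absurd (by zify; rw [sq_abs, hi.2]) (hm i.natAbs)

lemma phiPow_one_eq_thetaSeries : phiPow 1 = thetaSeries 1 := by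
  ext m
  rw [phiPow, coeff_mk]
  by_cases hsq : ∃ j : ℕ, j ^ 2 = m
  · obtain ⟨j, rfl⟩ := hsq
    rw [coeff_sq_thetaSeries]
    rcases j.eq_zero_or_pos with rfl | hj
    · simp
    · rw [if_neg (by positivity), if_pos ⟨j, hj, mul_one _⟩, if_neg hj.ne']
      rfl
  · push Not at hsq
    rw [coeff_thetaSeries_of_forall_sq_ne _ hsq, if_neg (by simpa [eq_comm] using hsq 0)]
    simp [hsq]

lemma phiNeg_eq_thetaSeries : phiNeg = thetaSeries fun j => j.negOnePow := by
  ext m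
  rw [phiNeg, coeff_mk]
  by_cases hsq : ∃ j : ℕ, j ^ 2 = m
  · obtain ⟨j, rfl⟩ := hsq
    rw [coeff_sq_thetaSeries]
    rcases j.eq_zero_or_pos with rfl | hj
    · simp
    · rw [if_neg (by positivity), if_pos ⟨j, hj, rfl⟩, if_neg hj.ne', Nat.sqrt_eq',
        Int.negOnePow_neg, Int.coe_negOnePow_natCast]
      ring
  · push Not at hsq
    rw [coeff_thetaSeries_of_forall_sq_ne _ hsq, if_neg (by simpa [eq_comm] using hsq 0)]
    simp [hsq]

lemma phiPow_eq_expand {k : ℕ} (hk : k ≠ 0) : phiPow k = expand k hk (phiPow 1) := by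
  ext n
  simp only [coeff_expand, phiPow, coeff_mk]
  by_cases hdvd : k ∣ n
  · obtain ⟨t, rfl⟩ := hdvd
    rw [mul_comm k t]
    simp [hk]
  · have hn : n ≠ 0 := by rintro rfl; exact hdvd (dvd_zero k)
    have hsq : ¬∃ j, 0 < j ∧ j ^ 2 * k = n := fun ⟨j, _, hj⟩ => hdvd ⟨j ^ 2, by rw [← hj, mul_comm]⟩
    simp [hdvd, hn, hsq]

lemma phiNeg_mul_phiPow_one : phiNeg * phiPow 1 = expand 2 two_ne_zero (phiNeg ^ 2) := by
  ext n
  rw [coeff_expand, phiNeg_eq_thetaSeries, phiPow_one_eq_thetaSeries, coeff_thetaSeries_mul]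
  split_ifs with hn
  · obtain ⟨m, rfl⟩ := hn
    rw [Nat.mul_div_cancel_left _ two_pos, sq, coeff_thetaSeries_mul,
      sum_sqAddSqReps_negOnePow_mul_negOnePow]
    simp
  · simpa using sum_sqAddSqReps_negOnePow_of_odd (Nat.odd_iff.2 (Nat.two_dvd_ne_zero.1 hn))

lemma phiNeg_mul_prod_phiPow (N : ℕ) :
    phiNeg * ∏ i ∈ range N, phiPow (2 ^ i) ^ 2 ^ i =
      expand (2 ^ N) (pow_ne_zero N two_ne_zero) (phiNeg ^ 2 ^ N) := by
  induction N with
  | zero => simp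
  | succ N ih =>
    rw [prod_range_succ, ← mul_assoc, ih, phiPow_eq_expand (pow_ne_zero N two_ne_zero), ← map_pow,
      ← map_mul, ← mul_pow, phiNeg_mul_phiPow_one, ← map_pow, ← pow_mul, ← pow_succ',
      ← expand_mul]
    rfl

lemma constantCoeff_phiNeg : constantCoeff phiNeg = 1 := by
  rw [← coeff_zero_eq_constantCoeff_apply, phiNeg, coeff_mk, if_pos rfl]

/-- `1/φ(-q) = ∏ φ(q^(2^i))^(2^i)` in the `q`-adic topology: the partial products invert `φ(-q)`
up to order `q^(2^N)`. -/
theorem one_div_phiNeg_eq_prod_phiPow (N m : ℕ) (hm : m < 2 ^ N) :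
    PowerSeries.coeff m
      (phiNeg * ∏ i ∈ Finset.range N, phiPow (2 ^ i) ^ (2 ^ i)) =
    if m = 0 then 1 else 0 := by
  rw [phiNeg_mul_prod_phiPow, coeff_expand_of_lt _ _ hm, map_pow, constantCoeff_phiNeg, one_pow]
end
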